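/- Let n ≥ 3 be an integer and let G be the Cartesian product K_n □ P_3, with vertex set {v_{i,p} : i ∈ {1,2,3}, 1 ≤ p ≤ n} where for each i the vertices v_{i,1}, …, v_{i,n} form a complete graph, and v_{1,p} is adjacent to v_{2,p} and v_{2,p} is adjacent to v_{3,p} for each p. Then for every edge e of G there exists a vertex set S with ω((G − e) − S) ≥ 2 and 3|S| < (n+1)·ω((G − e) − S); that is, G − e is not ((n+1)/3)-tough for any edge e. -/
import Mathlib


open SimpleGraph

/-- `numComp G S` is ω(G − S): the number of connected components of the graph
obtained from `G` by deleting the vertex set `S`. -/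
noncomputable def numComp {V : Type*} (G : SimpleGraph V) (S : Set V) : ℕ :=
  Nat.card (G.induce Sᶜ).ConnectedComponent

/-- The Cartesian product `K_n □ P_3`: three copies of `K_n` (indexed by the
first coordinate `i : Fin 3`), with `v_{1,p} ~ v_{2,p}` and `v_{2,p} ~ v_{3,p}`
for every `p` (paper indices `1,2,3` correspond to `0,1,2`). -/
def knp3 (n : ℕ) : SimpleGraph (Fin 3 × Fin n) :=
  SimpleGraph.fromRel (fun x y =>
    (x.1 = y.1 ∧ x.2 ≠ y.2) ∨ (x.2 = y.2 ∧ x.1.val + 1 = y.1.val))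

lemma ncard_le_of_injOn {V α : Type*} [Finite V] [Finite α] (S : Set V) (f : V → α)
    (hf : Set.InjOn f S) : S.ncard ≤ Nat.card α := by
  rw [← Nat.card_coe_set_eq]
  exact Nat.card_le_card_of_injective (fun x : S => f x)
    (fun x y h => Subtype.ext (hf x.2 y.2 h))

lemma numComp_ge {V : Type*} [Finite V] (H : SimpleGraph V) (S : Set V) (k : ℕ)
    (f : V → Fin k) (g : Fin k → V) (hg : ∀ j, g j ∉ S) (hfg : ∀ j, f (g j) = j)
    (hf : ∀ a b : V, a ∉ S → b ∉ S → H.Adj a b → f a = f b) :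
    k ≤ numComp H S := by
  haveI : Finite (H.induce Sᶜ).ConnectedComponent :=
    Finite.of_surjective _ (Quot.mk_surjective (r := (H.induce Sᶜ).Reachable))
  have key : ∀ (u v : ↥Sᶜ), (H.induce Sᶜ).Reachable u v → f u.val = f v.val := by
    intro u v h
    obtain ⟨p⟩ := h
    induction p with
    | nil => rfl
    | @cons x y z hadj p ih =>
        exact (hf x.val y.val x.2 y.2 (by simpa using hadj)).trans ih
  have hinj : Function.Injective
      (fun j : Fin k => (H.induce Sᶜ).connectedComponentMk ⟨g j, hg j⟩) := by
    intro j j' h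
    have hr := (SimpleGraph.ConnectedComponent.eq).mp h
    have := key _ _ hr
    simp only [hfg] at this
    exact this
  calc k = Nat.card (Fin k) := by simp
    _ ≤ _ := Nat.card_le_card_of_injective _ hinj

lemma knp3_adj {n : ℕ} {x y : Fin 3 × Fin n} :
    (knp3 n).Adj x y ↔ x ≠ y ∧
      (x.1 = y.1 ∨ (x.2 = y.2 ∧ (x.1.val + 1 = y.1.val ∨ y.1.val + 1 = x.1.val))) := by
  show (SimpleGraph.fromRel _).Adj x y ↔ _
  rw [SimpleGraph.fromRel_adj]
  constructor
  · rintro ⟨hne, (⟨h1, h2⟩ | ⟨h1, h2⟩) | (⟨h1, h2⟩ | ⟨h1, h2⟩)⟩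
    · exact ⟨hne, Or.inl h1⟩
    · exact ⟨hne, Or.inr ⟨h1, Or.inl h2⟩⟩
    · exact ⟨hne, Or.inl h1.symm⟩
    · exact ⟨hne, Or.inr ⟨h1.symm, Or.inr h2⟩⟩
  · rintro ⟨hne, h1 | ⟨h1, h2 | h2⟩⟩
    · exact ⟨hne, Or.inl (Or.inl ⟨h1, fun hc => hne (Prod.ext h1 hc)⟩)⟩
    · exact ⟨hne, Or.inl (Or.inr ⟨h1, h2⟩)⟩
    · exact ⟨hne, Or.inr (Or.inr ⟨h1.symm, h2⟩)⟩

lemma knp3_edge_cases {n : ℕ} (e : Sym2 (Fin 3 × Fin n)) (he : e ∈ (knp3 n).edgeSet) :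
    (∃ (i : Fin 3) (p q : Fin n), p ≠ q ∧ e = s((i, p), (i, q))) ∨
    (∃ p : Fin n, e = s(((0 : Fin 3), p), ((1 : Fin 3), p))) ∨
    (∃ p : Fin n, e = s(((1 : Fin 3), p), ((2 : Fin 3), p))) := by
  induction e with
  | _ x y =>
    rw [SimpleGraph.mem_edgeSet, knp3_adj] at he
    obtain ⟨hne, h⟩ := he
    rcases h with h1 | ⟨h1, h2⟩
    · left
      refine ⟨x.1, x.2, y.2, fun hc => hne (Prod.ext h1 hc), ?_⟩
      rw [show ((x.1, x.2) : Fin 3 × Fin n) = x from rfl,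
        show ((x.1, y.2) : Fin 3 × Fin n) = y from Prod.ext h1 rfl]
    · have hx3 := x.1.isLt
      have hy3 := y.1.isLt
      rcases h2 with h2 | h2
      · have hc : (x.1.val = 0 ∧ y.1.val = 1) ∨ (x.1.val = 1 ∧ y.1.val = 2) := by omega
        rcases hc with ⟨ha, hb⟩ | ⟨ha, hb⟩
        · right; left
          exact ⟨x.2, by rw [show x = ((0 : Fin 3), x.2) from Prod.ext (Fin.ext ha) rfl,
            show y = ((1 : Fin 3), x.2) from Prod.ext (Fin.ext hb) h1.symm]⟩
        · right; right
          exact ⟨x.2, by rw [show x = ((1 : Fin 3), x.2) from Prod.ext (Fin.ext ha) rfl,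
            show y = ((2 : Fin 3), x.2) from Prod.ext (Fin.ext hb) h1.symm]⟩
      · have hc : (y.1.val = 0 ∧ x.1.val = 1) ∨ (y.1.val = 1 ∧ x.1.val = 2) := by omega
        rcases hc with ⟨ha, hb⟩ | ⟨ha, hb⟩
        · right; left
          refine ⟨x.2, ?_⟩
          rw [Sym2.eq_swap]
          rw [show y = ((0 : Fin 3), x.2) from Prod.ext (Fin.ext ha) h1.symm,
            show x = ((1 : Fin 3), x.2) from Prod.ext (Fin.ext hb) rfl]
        · right; right
          refine ⟨x.2, ?_⟩
          rw [Sym2.eq_swap]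
          rw [show y = ((1 : Fin 3), x.2) from Prod.ext (Fin.ext ha) h1.symm,
            show x = ((2 : Fin 3), x.2) from Prod.ext (Fin.ext hb) rfl]

lemma exists_third {n : ℕ} (hn : 3 ≤ n) (p q : Fin n) : ∃ r : Fin n, r ≠ p ∧ r ≠ q := by
  by_contra hc
  push_neg at hc
  have hsub : (Finset.univ : Finset (Fin n)) ⊆ {p, q} := by
    intro r _
    rcases Classical.em (r = p) with h | h
    · simp [h]
    · simp [hc r h]
  have hle := Finset.card_le_card hsub
  simp only [Finset.card_univ, Fintype.card_fin] at hle
  have h2 : ({p, q} : Finset (Fin n)).card ≤ 2 :=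
    (Finset.card_insert_le _ _).trans (by simp)
  omega

lemma case_outer_row {n : ℕ} (hn : 3 ≤ n) (i : Fin 3) (hi : i ≠ 1) (p q : Fin n)
    (hpq : p ≠ q) :
    ∃ S : Set (Fin 3 × Fin n),
      2 ≤ numComp ((knp3 n).deleteEdges {s((i, p), (i, q))}) S ∧
      3 * S.ncard < (n + 1) * numComp ((knp3 n).deleteEdges {s((i, p), (i, q))}) S := by
  set e : Sym2 (Fin 3 × Fin n) := s((i, p), (i, q)) with he
  set S : Set (Fin 3 × Fin n) :=
    {x | (x.1 = i ∧ x.2 ≠ p ∧ x.2 ≠ q) ∨ x = (1, p) ∨ x = (1, q)} with hS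
  have hi1 : ((1 : Fin 3)) ≠ i := fun h => hi h.symm
  have hival : i.val = 0 ∨ i.val = 2 := by
    have h3 := i.isLt
    have : i.val ≠ 1 := fun h => hi (Fin.ext h)
    omega
  obtain ⟨r, hrp, hrq⟩ := exists_third hn p q
  set f : Fin 3 × Fin n → Fin 3 :=
    fun x => if x = (i, p) then 0 else if x = (i, q) then 1 else 2 with hf
  have key : ∀ (u v : Fin n), u ≠ v → s(((i : Fin 3), u), (i, v)) = e →
      ∀ c, c ∉ S → ¬ ((knp3 n).deleteEdges {e}).Adj (i, u) c := by
    intro u v huv hee c hc hadj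
    rw [SimpleGraph.deleteEdges_adj] at hadj
    obtain ⟨hA, hE⟩ := hadj
    rw [knp3_adj] at hA
    obtain ⟨hne, hA⟩ := hA
    simp only [Set.mem_singleton_iff] at hE
    have hmem : (({p, q} : Set (Fin n)) = {u, v}) := by
      rcases Sym2.eq_iff.mp (he.symm.trans hee.symm) with ⟨h1, h2⟩ | ⟨h1, h2⟩
      · have h1' : p = u := congrArg Prod.snd h1
        have h2' : q = v := congrArg Prod.snd h2
        rw [h1', h2']
      · have h1' : p = v := congrArg Prod.snd h1
        have h2' : q = u := congrArg Prod.snd h2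
        rw [h1', h2', Set.pair_comm]
    rcases hA with h1 | ⟨h1, h2⟩
    · have hci : c.1 = i := h1.symm
      have hc2u : c.2 ≠ u := by
        intro h
        exact hne (Prod.ext h1 h.symm)
      have hc2v : c.2 ≠ v := by
        intro h
        apply hE
        rw [← hee, show c = ((i : Fin 3), v) from Prod.ext hci h]
      apply hc
      left
      have hpair : ∀ w : Fin n, c.2 = w → w ∈ ({p, q} : Set (Fin n)) → False := by
        intro w hw hwm
        rw [hmem] at hwm
        rcases hwm with h' | h' <;> [exact hc2u (hw.trans h'); exact hc2v (hw.trans h')]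
      exact ⟨hci, fun h => hpair p h (by simp), fun h => hpair q h (by simp)⟩
    · have hc3 := c.1.isLt
      have hc1 : c.1.val = 1 := by
        simp only at h2
        omega
      have hcu : c = ((1 : Fin 3), u) := Prod.ext (Fin.ext hc1) h1.symm
      apply hc
      rw [hcu]
      have hu : u ∈ ({p, q} : Set (Fin n)) := by
        rw [hmem]; simp
      rcases hu with h' | h'
      · right; left; rw [h']
      · right; right; rw [h']
  refine ⟨S, ?_⟩
  have hω : 3 ≤ numComp ((knp3 n).deleteEdges {e}) S := by
    apply numComp_ge _ _ _ f ![(i, p), (i, q), ((1 : Fin 3), r)]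
    · intro j
      intro hj
      rw [hS] at hj
      fin_cases j <;> simp only [Set.mem_setOf_eq, Matrix.cons_val_zero, Matrix.cons_val_one,
        Matrix.head_cons, Matrix.cons_val_two, Matrix.tail_cons] at hj
      · rcases hj with ⟨-, h2, -⟩ | h | h
        · exact h2 rfl
        · exact hi (congrArg Prod.fst h)
        · exact hi (congrArg Prod.fst h)
      · rcases hj with ⟨-, -, h3⟩ | h | h
        · exact h3 rfl
        · exact hi (congrArg Prod.fst h)
        · exact hi (congrArg Prod.fst h)
      · rcases hj with ⟨h1, -, -⟩ | h | h
        · exact hi1 h1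
        · exact hrp (congrArg Prod.snd h)
        · exact hrq (congrArg Prod.snd h)
    · intro j
      fin_cases j <;>
        simp [hf, Prod.ext_iff, hpq.symm, hi1, hrp, hrq]
    · intro a b ha hb hadj
      by_cases hap : a = (i, p)
      · exact absurd (hap ▸ hadj) (key p q hpq rfl b hb)
      by_cases haq : a = (i, q)
      · exact absurd (haq ▸ hadj) (key q p hpq.symm (by rw [he, Sym2.eq_swap]) b hb)
      by_cases hbp : b = (i, p)
      · exact absurd (hbp ▸ hadj.symm) (key p q hpq rfl a ha)
      by_cases hbq : b = (i, q)
      · exact absurd (hbq ▸ hadj.symm) (key q p hpq.symm (by rw [he, Sym2.eq_swap]) a ha)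
      · simp [hf, hap, haq, hbp, hbq]
  have hcard : S.ncard ≤ n := by
    have hh := ncard_le_of_injOn S (fun x => x.2) ?_
    · simpa using hh
    · intro x hx y hy hxy
      rw [hS] at hx hy
      simp only [Set.mem_setOf_eq] at hx hy
      simp only at hxy
      rcases hx with ⟨hx1, hx2, hx3⟩ | rfl | rfl <;>
        rcases hy with ⟨hy1, hy2, hy3⟩ | rfl | rfl
      · exact Prod.ext (hx1.trans hy1.symm) hxy
      · exact absurd hxy hx2
      · exact absurd hxy hx3
      · exact absurd hxy.symm hy2
      · rfl
      · exact absurd hxy hpq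
      · exact absurd hxy.symm hy3
      · exact absurd hxy hpq.symm
      · rfl
  constructor
  · omega
  · have h2 : (n + 1) * 3 ≤ (n + 1) * numComp ((knp3 n).deleteEdges {e}) S :=
      Nat.mul_le_mul_left _ hω
    omega

lemma case_vertical {n : ℕ} (hn : 3 ≤ n) (t t' : Fin 3) (ht : t ≠ 1) (ht' : t' ≠ 1)
    (htt : t ≠ t') (p : Fin n) :
    ∃ S : Set (Fin 3 × Fin n),
      2 ≤ numComp ((knp3 n).deleteEdges {s(((1 : Fin 3), p), (t, p))}) S ∧
      3 * S.ncard < (n + 1) * numComp ((knp3 n).deleteEdges {s(((1 : Fin 3), p), (t, p))}) S := by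
  set e : Sym2 (Fin 3 × Fin n) := s(((1 : Fin 3), p), (t, p)) with he
  set S : Set (Fin 3 × Fin n) := {x | (x.1 = 1 ∧ x.2 ≠ p) ∨ x = (t', p)} with hS
  have htval : t.val = 0 ∨ t.val = 2 := by
    have h3 := t.isLt
    have : t.val ≠ 1 := fun h => ht (Fin.ext h)
    omega
  have ht'val : t'.val = 0 ∨ t'.val = 2 := by
    have h3 := t'.isLt
    have : t'.val ≠ 1 := fun h => ht' (Fin.ext h)
    omega
  have httval : t.val ≠ t'.val := fun h => htt (Fin.ext h)
  obtain ⟨r, hrp, -⟩ := exists_third hn p p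
  set f : Fin 3 × Fin n → Fin 3 :=
    fun x => if x = (1, p) then 0 else if x.1 = t then 1 else 2 with hf
  have key : ∀ c, c ∉ S → ¬ ((knp3 n).deleteEdges {e}).Adj (1, p) c := by
    intro c hc hadj
    rw [SimpleGraph.deleteEdges_adj] at hadj
    obtain ⟨hA, hE⟩ := hadj
    rw [knp3_adj] at hA
    obtain ⟨hne, hA⟩ := hA
    simp only [Set.mem_singleton_iff] at hE
    rcases hA with h1 | ⟨h1, h2⟩
    · -- same row 1
      apply hc
      left
      exact ⟨h1.symm, fun h => hne (Prod.ext h1 h.symm)⟩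
    · -- vertical from (1,p): c.1 = t or t'
      have hc3 := c.1.isLt
      have hcval : c.1.val = t.val ∨ c.1.val = t'.val := by
        simp only at h2
        omega
      rcases hcval with h' | h'
      · apply hE
        rw [he, show c = ((t : Fin 3), p) from Prod.ext (Fin.ext h') h1.symm]
      · apply hc
        right
        exact Prod.ext (Fin.ext h') h1.symm
  refine ⟨S, ?_⟩
  have hω : 3 ≤ numComp ((knp3 n).deleteEdges {e}) S := by
    apply numComp_ge _ _ _ f ![((1 : Fin 3), p), (t, p), (t', r)]
    · intro j hj
      rw [hS] at hj
      fin_cases j <;> simp only [Set.mem_setOf_eq, Matrix.cons_val_zero, Matrix.cons_val_one,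
        Matrix.head_cons, Matrix.cons_val_two, Matrix.tail_cons] at hj
      · rcases hj with ⟨-, h2⟩ | h
        · exact h2 rfl
        · exact ht' (congrArg Prod.fst h).symm
      · rcases hj with ⟨h1, -⟩ | h
        · exact ht h1
        · exact htt (congrArg Prod.fst h)
      · rcases hj with ⟨h1, -⟩ | h
        · exact ht' h1
        · exact hrp (congrArg Prod.snd h)
    · intro j
      have ht1 : t ≠ 1 := ht
      have ht'1 : t' ≠ 1 := ht'
      fin_cases j <;>
        simp [hf, Prod.ext_iff, ht1, ht'1, htt.symm]
    · intro a b ha hb hadj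
      by_cases hap : a = ((1 : Fin 3), p)
      · exact absurd (hap ▸ hadj) (key b hb)
      by_cases hbp : b = ((1 : Fin 3), p)
      · exact absurd (hbp ▸ hadj.symm) (key a ha)
      have ha1 : a.1 ≠ 1 := by
        intro h
        by_cases h2 : a.2 = p
        · exact hap (Prod.ext h h2)
        · exact ha (Or.inl ⟨h, h2⟩)
      have hb1 : b.1 ≠ 1 := by
        intro h
        by_cases h2 : b.2 = p
        · exact hbp (Prod.ext h h2)
        · exact hb (Or.inl ⟨h, h2⟩)
      have hab : a.1 = b.1 := by
        rw [SimpleGraph.deleteEdges_adj, knp3_adj] at hadj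
        obtain ⟨⟨-, hA⟩, -⟩ := hadj
        rcases hA with h1 | ⟨-, h2⟩
        · exact h1
        · exfalso
          have h3 := a.1.isLt
          have h4 := b.1.isLt
          have h5 : a.1.val ≠ 1 := fun h => ha1 (Fin.ext h)
          have h6 : b.1.val ≠ 1 := fun h => hb1 (Fin.ext h)
          omega
      simp only [hf]
      rw [if_neg hap, if_neg hbp, hab]
  have hcard : S.ncard ≤ n := by
    have hh := ncard_le_of_injOn S (fun x => x.2) ?_
    · simpa using hh
    · intro x hx y hy hxy
      rw [hS] at hx hy
      simp only [Set.mem_setOf_eq] at hx hy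
      simp only at hxy
      rcases hx with ⟨hx1, hx2⟩ | rfl <;> rcases hy with ⟨hy1, hy2⟩ | rfl
      · exact Prod.ext (hx1.trans hy1.symm) hxy
      · exact absurd hxy hx2
      · exact absurd hxy.symm hy2
      · rfl
  constructor
  · omega
  · have h2 : (n + 1) * 3 ≤ (n + 1) * numComp ((knp3 n).deleteEdges {e}) S :=
      Nat.mul_le_mul_left _ hω
    omega

lemma case_middle_row {n : ℕ} (hn : 3 ≤ n) (p q : Fin n) (hpq : p ≠ q) :
    ∃ S : Set (Fin 3 × Fin n),
      2 ≤ numComp ((knp3 n).deleteEdges {s(((1 : Fin 3), p), ((1 : Fin 3), q))}) S ∧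
      3 * S.ncard <
        (n + 1) * numComp ((knp3 n).deleteEdges {s(((1 : Fin 3), p), ((1 : Fin 3), q))}) S := by
  set e : Sym2 (Fin 3 × Fin n) := s(((1 : Fin 3), p), ((1 : Fin 3), q)) with he
  set S : Set (Fin 3 × Fin n) :=
    {x | (x.1 = 1 ∧ x.2 ≠ p ∧ x.2 ≠ q) ∨
      x = (0, p) ∨ x = (0, q) ∨ x = (2, p) ∨ x = (2, q)} with hS
  obtain ⟨r, hrp, hrq⟩ := exists_third hn p q
  set f : Fin 3 × Fin n → Fin 4 :=
    fun x => if x = (1, p) then 0 else if x = (1, q) then 1 else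
      if x.1 = 0 then 2 else 3 with hf
  have key : ∀ (u v : Fin n), u ≠ v → s(((1 : Fin 3), u), ((1 : Fin 3), v)) = e →
      ∀ c, c ∉ S → ¬ ((knp3 n).deleteEdges {e}).Adj (1, u) c := by
    intro u v huv hee c hc hadj
    rw [SimpleGraph.deleteEdges_adj] at hadj
    obtain ⟨hA, hE⟩ := hadj
    rw [knp3_adj] at hA
    obtain ⟨hne, hA⟩ := hA
    simp only [Set.mem_singleton_iff] at hE
    have hmem : (({p, q} : Set (Fin n)) = {u, v}) := by
      rcases Sym2.eq_iff.mp (he.symm.trans hee.symm) with ⟨h1, h2⟩ | ⟨h1, h2⟩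
      · have h1' : p = u := congrArg Prod.snd h1
        have h2' : q = v := congrArg Prod.snd h2
        rw [h1', h2']
      · have h1' : p = v := congrArg Prod.snd h1
        have h2' : q = u := congrArg Prod.snd h2
        rw [h1', h2', Set.pair_comm]
    rcases hA with h1 | ⟨h1, h2⟩
    · -- same row 1
      have hc2u : c.2 ≠ u := fun h => hne (Prod.ext h1 h.symm)
      have hc2v : c.2 ≠ v := by
        intro h
        apply hE
        rw [← hee, show c = ((1 : Fin 3), v) from Prod.ext h1.symm h]
      apply hc
      left
      have hpair : ∀ w : Fin n, c.2 = w → w ∈ ({p, q} : Set (Fin n)) → False := by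
        intro w hw hwm
        rw [hmem] at hwm
        rcases hwm with h' | h' <;> [exact hc2u (hw.trans h'); exact hc2v (hw.trans h')]
      exact ⟨h1.symm, fun h => hpair p h (by simp), fun h => hpair q h (by simp)⟩
    · -- vertical: c = (0,u) or (2,u), and u ∈ {p,q}
      have hc3 := c.1.isLt
      have hu : u ∈ ({p, q} : Set (Fin n)) := by
        rw [hmem]; simp
      have hcval : c.1.val = 0 ∨ c.1.val = 2 := by
        simp only at h2
        omega
      apply hc
      rcases hcval with h' | h' <;> rcases hu with h'' | h''
      · right; left
        rw [show c = ((0 : Fin 3), u) from Prod.ext (Fin.ext h') h1.symm, h'']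
      · right; right; left
        rw [show c = ((0 : Fin 3), u) from Prod.ext (Fin.ext h') h1.symm, h'']
      · right; right; right; left
        rw [show c = ((2 : Fin 3), u) from Prod.ext (Fin.ext h') h1.symm, h'']
      · right; right; right; right
        rw [show c = ((2 : Fin 3), u) from Prod.ext (Fin.ext h') h1.symm, h'']
  refine ⟨S, ?_⟩
  have hω : 4 ≤ numComp ((knp3 n).deleteEdges {e}) S := by
    apply numComp_ge _ _ _ f
      ![((1 : Fin 3), p), ((1 : Fin 3), q), ((0 : Fin 3), r), ((2 : Fin 3), r)]
    · intro j
      fin_cases j <;>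
        simp [hS, Prod.ext_iff, hpq, hpq.symm, hrp, hrq]
    · intro j
      fin_cases j <;>
        simp [hf, Prod.ext_iff, hpq.symm, hrp, hrq]
    · intro a b ha hb hadj
      by_cases hap : a = ((1 : Fin 3), p)
      · exact absurd (hap ▸ hadj) (key p q hpq rfl b hb)
      by_cases haq : a = ((1 : Fin 3), q)
      · exact absurd (haq ▸ hadj) (key q p hpq.symm (by rw [he, Sym2.eq_swap]) b hb)
      by_cases hbp : b = ((1 : Fin 3), p)
      · exact absurd (hbp ▸ hadj.symm) (key p q hpq rfl a ha)
      by_cases hbq : b = ((1 : Fin 3), q)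
      · exact absurd (hbq ▸ hadj.symm) (key q p hpq.symm (by rw [he, Sym2.eq_swap]) a ha)
      have ha1 : a.1 ≠ 1 := by
        intro h
        by_cases h2 : a.2 = p
        · exact hap (Prod.ext h h2)
        by_cases h3 : a.2 = q
        · exact haq (Prod.ext h h3)
        · exact ha (Or.inl ⟨h, h2, h3⟩)
      have hb1 : b.1 ≠ 1 := by
        intro h
        by_cases h2 : b.2 = p
        · exact hbp (Prod.ext h h2)
        by_cases h3 : b.2 = q
        · exact hbq (Prod.ext h h3)
        · exact hb (Or.inl ⟨h, h2, h3⟩)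
      have hab : a.1 = b.1 := by
        rw [SimpleGraph.deleteEdges_adj, knp3_adj] at hadj
        obtain ⟨⟨-, hA⟩, -⟩ := hadj
        rcases hA with h1 | ⟨-, h2⟩
        · exact h1
        · exfalso
          have h3 := a.1.isLt
          have h4 := b.1.isLt
          have h5 : a.1.val ≠ 1 := fun h => ha1 (Fin.ext h)
          have h6 : b.1.val ≠ 1 := fun h => hb1 (Fin.ext h)
          omega
      simp only [hf]
      rw [if_neg hap, if_neg haq, if_neg hbp, if_neg hbq, hab]
  have hcard : S.ncard ≤ n + 2 := by
    set A : Set (Fin 3 × Fin n) :=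
      {x | (x.1 = 1 ∧ x.2 ≠ p ∧ x.2 ≠ q) ∨ x = (0, p) ∨ x = (0, q)} with hA
    have hSU : S = A ∪ {((2 : Fin 3), p), ((2 : Fin 3), q)} := by
      rw [hS, hA]
      ext x
      simp only [Set.mem_setOf_eq, Set.mem_union, Set.mem_insert_iff, Set.mem_singleton_iff]
      tauto
    have hAcard : A.ncard ≤ n := by
      have hh := ncard_le_of_injOn A (fun x => x.2) ?_
      · simpa using hh
      · intro x hx y hy hxy
        rw [hA] at hx hy
        simp only [Set.mem_setOf_eq] at hx hy
        simp only at hxy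
        rcases hx with ⟨hx1, hx2, hx3⟩ | rfl | rfl <;> rcases hy with ⟨hy1, hy2, hy3⟩ | rfl | rfl
        · exact Prod.ext (hx1.trans hy1.symm) hxy
        · exact absurd hxy hx2
        · exact absurd hxy hx3
        · exact absurd hxy.symm hy2
        · rfl
        · exact absurd hxy hpq
        · exact absurd hxy.symm hy3
        · exact absurd hxy hpq.symm
        · rfl
    have hpair : ({((2 : Fin 3), p), ((2 : Fin 3), q)} : Set (Fin 3 × Fin n)).ncard ≤ 2 := by
      apply (Set.ncard_insert_le _ _).trans
      simp
    calc S.ncard ≤ A.ncard + ({((2 : Fin 3), p), ((2 : Fin 3), q)} : Set (Fin 3 × Fin n)).ncard := by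
          rw [hSU]; exact Set.ncard_union_le _ _
      _ ≤ n + 2 := by omega
  constructor
  · omega
  · have h2 : (n + 1) * 4 ≤ (n + 1) * numComp ((knp3 n).deleteEdges {e}) S :=
      Nat.mul_le_mul_left _ hω
    omega

/-- for `n ≥ 3`, for every edge `e` of `K_n □ P_3` there is a
vertex set `S` with `ω((G − e) − S) ≥ 2` and `3|S| < (n+1)·ω((G − e) − S)`;
that is, `G − e` is not `(n+1)/3`-tough for any edge `e`. -/
theorem knp3_edge_deletion_destroys_toughness (n : ℕ) (hn : 3 ≤ n) :
    ∀ e ∈ (knp3 n).edgeSet, ∃ S : Set (Fin 3 × Fin n),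
      2 ≤ numComp ((knp3 n).deleteEdges {e}) S ∧
      3 * S.ncard < (n + 1) * numComp ((knp3 n).deleteEdges {e}) S := by
  intro e he
  rcases knp3_edge_cases e he with ⟨i, p, q, hpq, rfl⟩ | ⟨p, rfl⟩ | ⟨p, rfl⟩
  · by_cases hi : i = 1
    · subst hi
      exact case_middle_row hn p q hpq
    · exact case_outer_row hn i hi p q hpq
  · rw [show s(((0 : Fin 3), p), ((1 : Fin 3), p)) = s(((1 : Fin 3), p), ((0 : Fin 3), p)) from
      Sym2.eq_swap]
    exact case_vertical hn 0 2 (by decide) (by decide) (by decide) p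
  · rw [show s(((1 : Fin 3), p), ((2 : Fin 3), p)) = s(((1 : Fin 3), p), ((2 : Fin 3), p)) from
      rfl]
    exact case_vertical hn 2 0 (by decide) (by decide) (by decide) p
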